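/- Let R ⊆ V with |R| ≥ 2 and for σ : R → {1,...,q} define ρ(R, σ) = Σ_{g connected graph on vertex set R} Π_{{x,y} ∈ E_g} (-𝟙[σ(x)=σ(y)]·𝟙[{x,y} ∈ E]). Then Σ_{σ : R → [q]} ρ(R, σ) = q · Σ_{g connected spanning subgraph of G|_R} (-1)^{|E_g|} if G|_R is connected, and equals 0 otherwise. -/
import Mathlib

attribute [-instance] Sym2.instPartialOrder


open scoped Classical

namespace BC

variable {V : Type*}

/-- The set of vertices incident to at least one edge of `τ`. -/
noncomputable def supp [Fintype V] (τ : Finset (Sym2 V)) : Finset V :=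
  Finset.univ.filter (fun v => ∃ e ∈ τ, v ∈ e)

/-- The graph on vertex set `R` with edge set `F` is connected. -/
def ConnOn (R : Finset V) (F : Finset (Sym2 V)) : Prop :=
  (SimpleGraph.induce (R : Set V) (SimpleGraph.fromEdgeSet (F : Set (Sym2 V)))).Connected

/-- Edges of `G` with both endpoints in `R` (edge set of the induced subgraph `G|_R`). -/
noncomputable def edgesIn [Fintype V] [DecidableEq V] (G : SimpleGraph V) [DecidableRel G.Adj]
    (R : Finset V) : Finset (Sym2 V) :=
  G.edgeFinset.filter (fun e => ∀ v ∈ e, v ∈ R)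

/-- `g` is (the edge set of) a connected spanning subgraph of `G|_R`. -/
def IsCSS [Fintype V] [DecidableEq V] (G : SimpleGraph V) [DecidableRel G.Adj]
    (R : Finset V) (g : Finset (Sym2 V)) : Prop :=
  g ⊆ edgesIn G R ∧ ConnOn R g

/-- `τ` is (the edge set of) a spanning tree of `G|_R`. -/
def IsSpanningTree [Fintype V] [DecidableEq V] (G : SimpleGraph V) [DecidableRel G.Adj]
    (R : Finset V) (τ : Finset (Sym2 V)) : Prop :=
  IsCSS G R τ ∧ τ.card = R.card - 1

/-- A forest: an edge set containing no cycle. -/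
def IsForest (F : Finset (Sym2 V)) : Prop :=
  (SimpleGraph.fromEdgeSet (F : Set (Sym2 V))).IsAcyclic

/-- `τ` is the edge set of a nontrivial tree component of the forest `F`. -/
def IsTreeComponent [Fintype V] (F τ : Finset (Sym2 V)) : Prop :=
  τ ⊆ F ∧ τ.Nonempty ∧ ConnOn (supp τ) τ ∧ ∀ e ∈ F \ τ, ∀ v ∈ e, v ∉ supp τ

/-- `C` is the edge set of a simple circuit (cycle) of `G`. -/
def IsCircuit (G : SimpleGraph V) (C : Finset (Sym2 V)) : Prop :=
  ∃ (v : V) (w : G.Walk v v), w.IsCycle ∧ w.edges.toFinset = C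

/-- `B` is a broken circuit of `G`: a simple circuit minus its maximal edge. -/
def IsBrokenCircuit [LinearOrder (Sym2 V)] (G : SimpleGraph V) (B : Finset (Sym2 V)) : Prop :=
  ∃ C e, IsCircuit G C ∧ e ∈ C ∧ (∀ f ∈ C, f ≤ e) ∧ B = C.erase e

/-- `m` is a partition scheme in `G`. -/
def IsPartitionScheme [Fintype V] [DecidableEq V] (G : SimpleGraph V) [DecidableRel G.Adj]
    (m : Finset (Sym2 V) → Finset (Sym2 V)) : Prop :=
  ∀ R : Finset V, 2 ≤ R.card → ConnOn R (edgesIn G R) →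
    (∀ τ, IsSpanningTree G R τ → τ ⊆ m τ ∧ IsCSS G R (m τ)) ∧
    (∀ g, IsCSS G R g → ∃! τ, IsSpanningTree G R τ ∧ τ ⊆ g ∧ g ⊆ m τ)

/-- The minimal-tree partition scheme: `μ(τ)` adds to `τ` every edge `{x,y}` of `G|_R`
larger than all the edges on the path in `τ` from `x` to `y`. -/
noncomputable def mu [Fintype V] [DecidableEq V] (G : SimpleGraph V) [DecidableRel G.Adj]
    [LinearOrder (Sym2 V)] (R : Finset V) (τ : Finset (Sym2 V)) : Finset (Sym2 V) :=
  τ ∪ (edgesIn G R).filter (fun e => e ∉ τ ∧ ∀ x y : V, e = s(x, y) →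
    ∀ p : (SimpleGraph.fromEdgeSet (τ : Set (Sym2 V))).Walk x y, p.IsPath → ∀ f ∈ p.edges, f < e)

/-- All unordered pairs of distinct elements of `R`. -/
noncomputable def allPairs [DecidableEq V] (R : Finset V) : Finset (Sym2 V) :=
  ((R ×ˢ R).filter (fun p => p.1 ≠ p.2)).image (fun p => s(p.1, p.2))

/-- `f` takes the same value at the two endpoints of `e`. -/
def eqOn (f : V → ℕ) (e : Sym2 V) : Prop :=
  Sym2.lift ⟨fun x y => f x = f y, fun x y => propext ⟨Eq.symm, Eq.symm⟩⟩ e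

/-- Extension of a coloring of `R` to `V` (with junk value `q` outside `R`). -/
noncomputable def extV [DecidableEq V] (R : Finset V) (q : ℕ) (σ : ↥R → Fin q) (v : V) : ℕ :=
  if h : v ∈ R then (σ ⟨v, h⟩ : ℕ) else q

/-- The factor attached to an edge `e`: `-1` if the endpoints of `e` have equal colors and
`e` is an edge of `G`, and `0` otherwise. -/
noncomputable def edgeFactor [Fintype V] [DecidableEq V] (G : SimpleGraph V)
    [DecidableRel G.Adj] (f : V → ℕ) (e : Sym2 V) : ℤ :=
  if e ∈ G.edgeFinset ∧ eqOn f e then -1 else 0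

/-- The activity `ρ(R, σ)`: the sum over all connected graphs on vertex set `R` of the
product of the edge factors. -/
noncomputable def rho [Fintype V] [DecidableEq V] (G : SimpleGraph V) [DecidableRel G.Adj]
    (R : Finset V) (q : ℕ) (σ : ↥R → Fin q) : ℤ :=
  ∑ g ∈ (allPairs R).powerset.filter (ConnOn R), ∏ e ∈ g, edgeFactor G (extV R q σ) e


lemma const_of_connOn {R : Finset V} {g : Finset (Sym2 V)} (hc : ConnOn R g)
    (f : V → ℕ) (hf : ∀ e ∈ g, eqOn f e) : ∀ x ∈ R, ∀ y ∈ R, f x = f y := by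
  suffices h : ∀ a b : (R : Set V),
      (SimpleGraph.induce (R : Set V) (SimpleGraph.fromEdgeSet (g : Set (Sym2 V)))).Reachable a b →
      f a = f b by
    intro x hx y hy
    exact h ⟨x, hx⟩ ⟨y, hy⟩ (hc.preconnected _ _)
  intro a b ⟨w⟩
  induction w with
  | nil => rfl
  | cons h p ih =>
    rename_i u u' _
    have hadj : (SimpleGraph.fromEdgeSet (g : Set (Sym2 V))).Adj u.1 u'.1 := h
    rw [SimpleGraph.fromEdgeSet_adj] at hadj
    exact (hf _ hadj.1).trans ih

lemma connOn_mono {R : Finset V} {g F : Finset (Sym2 V)} (hsub : g ⊆ F) (hc : ConnOn R g) :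
    ConnOn R F := by
  apply hc.mono
  intro a b hab
  have : (SimpleGraph.fromEdgeSet (g : Set (Sym2 V))).Adj a.1 b.1 := hab
  rw [SimpleGraph.fromEdgeSet_adj] at this
  show (SimpleGraph.fromEdgeSet (F : Set (Sym2 V))).Adj a.1 b.1
  rw [SimpleGraph.fromEdgeSet_adj]
  exact ⟨hsub this.1, this.2⟩

lemma mem_of_mem_allPairs [DecidableEq V] {R : Finset V} {e : Sym2 V}
    (he : e ∈ allPairs R) : ∀ v ∈ e, v ∈ R := by
  simp only [allPairs, Finset.mem_image, Finset.mem_filter, Finset.mem_product] at he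
  obtain ⟨p, ⟨⟨h1, h2⟩, -⟩, rfl⟩ := he
  intro v hv
  rw [Sym2.mem_iff] at hv
  rcases hv with rfl | rfl <;> assumption

lemma edgesIn_subset_allPairs [Fintype V] [DecidableEq V] (G : SimpleGraph V)
    [DecidableRel G.Adj] (R : Finset V) : edgesIn G R ⊆ allPairs R := by
  intro e he
  rw [edgesIn, Finset.mem_filter] at he
  obtain ⟨he1, he2⟩ := he
  induction e using Sym2.ind with
  | _ x y =>
    rw [SimpleGraph.mem_edgeFinset, SimpleGraph.mem_edgeSet] at he1
    simp only [allPairs, Finset.mem_image, Finset.mem_filter, Finset.mem_product]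
    exact ⟨(x, y), ⟨⟨he2 x (by simp), he2 y (by simp)⟩, he1.ne⟩, rfl⟩

lemma card_colorings [DecidableEq V] {R : Finset V} {g : Finset (Sym2 V)} (q : ℕ)
    (hR : R.Nonempty) (hc : ConnOn R g) (hg : ∀ e ∈ g, ∀ v ∈ e, v ∈ R) :
    (Finset.univ.filter (fun σ : ↥R → Fin q => ∀ e ∈ g, eqOn (extV R q σ) e)).card = q := by
  obtain ⟨r0, hr0⟩ := hR
  have key : (Finset.univ.filter (fun σ : ↥R → Fin q => ∀ e ∈ g, eqOn (extV R q σ) e)).card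
      = (Finset.univ : Finset (Fin q)).card := by
    apply Finset.card_bij' (fun σ _ => σ ⟨r0, hr0⟩) (fun c _ => fun _ => c)
    · intro σ hσ; exact Finset.mem_univ _
    · intro σ hσ
      rw [Finset.mem_filter] at hσ
      funext v
      have := const_of_connOn hc (extV R q σ) hσ.2 v.1 v.2 r0 hr0
      simp only [extV, dif_pos v.2, dif_pos hr0] at this
      exact (Fin.val_injective this).symm
    · intro c _; rfl
    · intro c _
      rw [Finset.mem_filter]
      refine ⟨Finset.mem_univ _, fun e he => ?_⟩
      induction e using Sym2.ind with
      | _ x y =>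
        have hx : x ∈ R := hg _ he x (by simp)
        have hy : y ∈ R := hg _ he y (by simp)
        show extV R q (fun _ => c) x = extV R q (fun _ => c) y
        simp [extV, hx, hy]
  simpa using key

lemma prod_edgeFactor [Fintype V] [DecidableEq V] (G : SimpleGraph V) [DecidableRel G.Adj]
    {R : Finset V} {g : Finset (Sym2 V)} (hg : g ⊆ edgesIn G R) (f : V → ℕ) :
    ∏ e ∈ g, edgeFactor G f e = if (∀ e ∈ g, eqOn f e) then (-1 : ℤ) ^ g.card else 0 := by
  by_cases h : ∀ e ∈ g, eqOn f e
  · rw [if_pos h, ← Finset.prod_const]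
    apply Finset.prod_congr rfl
    intro e he
    have : e ∈ G.edgeFinset := (Finset.mem_filter.mp (hg he)).1
    rw [edgeFactor, if_pos ⟨this, h e he⟩]
  · rw [if_neg h]
    push_neg at h
    obtain ⟨e, he, hne⟩ := h
    exact Finset.prod_eq_zero he (by rw [edgeFactor, if_neg (fun hh => hne hh.2)])

lemma sum_sigma_prod [Fintype V] [DecidableEq V] (G : SimpleGraph V) [DecidableRel G.Adj]
    {R : Finset V} (hR : R.Nonempty) (q : ℕ) {g : Finset (Sym2 V)}
    (hgA : g ⊆ allPairs R) (hcon : ConnOn R g) :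
    ∑ σ : ↥R → Fin q, ∏ e ∈ g, edgeFactor G (extV R q σ) e =
      if g ⊆ edgesIn G R then (q : ℤ) * (-1) ^ g.card else 0 := by
  by_cases hsub : g ⊆ edgesIn G R
  · rw [if_pos hsub]
    have : ∀ σ : ↥R → Fin q, ∏ e ∈ g, edgeFactor G (extV R q σ) e =
        if (∀ e ∈ g, eqOn (extV R q σ) e) then (-1 : ℤ) ^ g.card else 0 :=
      fun σ => prod_edgeFactor G hsub _
    rw [Finset.sum_congr rfl (fun σ _ => this σ), ← Finset.sum_filter]
    rw [Finset.sum_const]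
    have hcard := card_colorings (R := R) (g := g) q hR hcon
      (fun e he => mem_of_mem_allPairs (hgA he))
    rw [nsmul_eq_mul]
    congr 1
    norm_cast
    convert hcard using 2
    congr!
  · rw [if_neg hsub]
    obtain ⟨e, he, hnot⟩ := Finset.not_subset.mp hsub
    have hnotE : e ∉ G.edgeFinset := by
      intro hE
      exact hnot (Finset.mem_filter.mpr ⟨hE, mem_of_mem_allPairs (hgA he)⟩)
    apply Finset.sum_eq_zero
    intro σ _
    exact Finset.prod_eq_zero he (by rw [edgeFactor, if_neg (fun hh => hnotE hh.1)])

/-- Summing the activity `ρ(R, ·)` over all colorings of `R`. -/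
theorem sum_rho [Fintype V] [DecidableEq V] (G : SimpleGraph V) [DecidableRel G.Adj]
    (R : Finset V) (hR : 2 ≤ R.card) (q : ℕ) (hq : 1 ≤ q) :
    ∑ σ : ↥R → Fin q, rho G R q σ =
      if ConnOn R (edgesIn G R) then
        (q : ℤ) * ∑ g ∈ (edgesIn G R).powerset.filter (IsCSS G R), (-1 : ℤ) ^ g.card
      else 0 := by
  have hRne : R.Nonempty := Finset.card_pos.mp (by omega)
  have key : ∑ σ : ↥R → Fin q, rho G R q σ =
      (q : ℤ) * ∑ g ∈ (edgesIn G R).powerset.filter (IsCSS G R), (-1 : ℤ) ^ g.card := by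
    unfold rho
    rw [Finset.sum_comm]
    have step : ∀ g ∈ (allPairs R).powerset.filter (ConnOn R),
        ∑ σ : ↥R → Fin q, ∏ e ∈ g, edgeFactor G (extV R q σ) e =
        if g ⊆ edgesIn G R then (q : ℤ) * (-1) ^ g.card else 0 := by
      intro g hg
      rw [Finset.mem_filter, Finset.mem_powerset] at hg
      exact sum_sigma_prod G hRne q hg.1 hg.2
    rw [Finset.sum_congr rfl step, ← Finset.sum_filter, Finset.mul_sum]
    apply Finset.sum_congr
    · ext g
      simp only [Finset.mem_filter, Finset.mem_powerset, IsCSS]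
      constructor
      · rintro ⟨⟨-, hcon⟩, hsub⟩
        exact ⟨hsub, hsub, hcon⟩
      · rintro ⟨hsub, -, hcon⟩
        exact ⟨⟨hsub.trans (edgesIn_subset_allPairs G R), hcon⟩, hsub⟩
    · intros; rfl
  rw [key]
  by_cases hcon : ConnOn R (edgesIn G R)
  · rw [if_pos hcon]
  · rw [if_neg hcon]
    have : (edgesIn G R).powerset.filter (IsCSS G R) = ∅ := by
      rw [Finset.filter_eq_empty_iff]
      intro g _ hcss
      exact hcon (connOn_mono hcss.1 hcss.2)
    rw [this, Finset.sum_empty, mul_zero]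

end BC
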